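/- arXiv:1110.5848 — 6 statements merged into one kernel-verified Lean document; each statement's English description precedes it below -/
import Mathlib

section
/- A (not necessarily associative) K-algebra (A, μ), where μ : A ⊗[K] A → A is the linear map encoding multiplication, is zero product determined if and only if the kernel of μ is generated as a K-submodule by the pure tensors it contains, i.e., ker μ = span{ a₁ ⊗ a₂ : a₁a₂ = 0 }. -/
/-! A linear map `φ` factors through `μ` onto its range iff `ker μ ≤ ker φ`. So zero product
determination says that every `φ` killing the pure tensors in `ker μ` kills all of `ker μ`;
testing this on the quotient map by the span of those pure tensors gives `ker μ ≤ span`, and the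
reverse inclusion always holds. -/

open TensorProduct

universe u v w

namespace LinearMap

variable {R M N B : Type*} [CommRing R] [AddCommGroup M] [Module R M]
  [AddCommGroup N] [Module R N] [AddCommGroup B] [Module R B]

theorem exists_comp_rangeRestrict_iff_ker_le (f : M →ₗ[R] N) (φ : M →ₗ[R] B) :
    (∃ ψ : range f →ₗ[R] B, ∀ x, φ x = ψ ⟨f x, mem_range_self f x⟩) ↔ ker f ≤ ker φ := by
  constructor
  · rintro ⟨ψ, hψ⟩ x hx
    have hfx : (⟨f x, mem_range_self f x⟩ : range f) = 0 := Subtype.ext hx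
    rw [mem_ker, hψ x, hfx, map_zero]
  · intro h
    refine ⟨(ker f).liftQ φ h ∘ₗ f.quotKerEquivRange.symm.toLinearMap, fun x => ?_⟩
    simp [quotKerEquivRange_symm_apply_image]

end LinearMap

namespace Submodule

variable {R : Type*} {M : Type v} [CommRing R] [AddCommGroup M] [Module R M]

/-- The universe `max v w` is large enough to contain the test module `M ⧸ span R s`. -/
theorem le_span_iff_forall_le_ker (s : Set M) (P : Submodule R M) :
    (∀ (B : Type (max v w)) [AddCommGroup B] [Module R B] (φ : M →ₗ[R] B),
      s ⊆ LinearMap.ker φ → P ≤ LinearMap.ker φ) ↔ P ≤ span R s := by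
  constructor
  · intro h
    let φ : M →ₗ[R] ULift.{max v w} (M ⧸ span R s) :=
      ULift.moduleEquiv.symm.toLinearMap ∘ₗ (span R s).mkQ
    have hφ : LinearMap.ker φ = span R s := by
      rw [LinearEquiv.ker_comp, ker_mkQ]
    simpa only [hφ] using h _ φ (hφ.symm ▸ subset_span)
  · intro hP B _ _ φ hs
    exact hP.trans (span_le.mpr hs)

end Submodule

theorem zpd_characterization {K : Type u} [CommRing K]
    {A : Type v} [AddCommGroup A] [Module K A]
    (μ : TensorProduct K A A →ₗ[K] A) :
    (∀ (B : Type (max u v w)) [AddCommGroup B] [Module K B]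
        (φ : TensorProduct K A A →ₗ[K] B),
      (∀ a₁ a₂ : A, μ (a₁ ⊗ₜ a₂) = 0 → φ (a₁ ⊗ₜ a₂) = 0) →
      ∃ ψ : LinearMap.range μ →ₗ[K] B,
        ∀ x, φ x = ψ ⟨μ x, LinearMap.mem_range_self μ x⟩) ↔
    LinearMap.ker μ =
      Submodule.span K {t | ∃ a₁ a₂ : A, t = a₁ ⊗ₜ[K] a₂ ∧ μ (a₁ ⊗ₜ[K] a₂) = 0} := by
  set S := {t | ∃ a₁ a₂ : A, t = a₁ ⊗ₜ[K] a₂ ∧ μ (a₁ ⊗ₜ[K] a₂) = 0}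
  have hS_ker : S ⊆ LinearMap.ker μ := by
    rintro _ ⟨a₁, a₂, rfl, h⟩
    exact h
  have hS_subset_ker_iff {B : Type (max u v w)} [AddCommGroup B] [Module K B]
      (φ : TensorProduct K A A →ₗ[K] B) :
      S ⊆ LinearMap.ker φ ↔ ∀ a₁ a₂ : A, μ (a₁ ⊗ₜ a₂) = 0 → φ (a₁ ⊗ₜ a₂) = 0 := by
    refine ⟨fun h a₁ a₂ h0 => h ⟨a₁, a₂, rfl, h0⟩, ?_⟩
    rintro h _ ⟨a₁, a₂, rfl, h0⟩
    exact h a₁ a₂ h0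
  simp only [LinearMap.exists_comp_rangeRestrict_iff_ker_le, ← hS_subset_ker_iff]
  rw [Submodule.le_span_iff_forall_le_ker.{v, max u w}, le_antisymm_iff,
    and_iff_left (Submodule.span_le.mpr hS_ker)]
end

section
/- Let K be a field and V a K-vector space with dim V ≥ 2. Then the tensor algebra T(V), viewed as a K-algebra, is not zero product determined: the set of pure tensors in the kernel of its multiplication map μ : T(V) ⊗ T(V) → T(V) is {0}, yet ker μ ≠ 0. -/
/-!
Since `T(V)` has no zero divisors, `a ⊗ b ∈ ker μ` forces `a = 0` or `b = 0`, so the only pure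
tensor in `ker μ` is `0`. On the other hand `a ⊗ 1 - 1 ⊗ a` always lies in `ker μ`, and it is
nonzero as soon as `a` and `1` are linearly independent, e.g. for `a = ι x` with `x ≠ 0`.
-/

open TensorProduct

/-- The set of pure tensors killed by the multiplication map. -/
def zeroTensors {K A : Type*} [CommRing K] [AddCommGroup A] [Module K A]
    (μ : TensorProduct K A A →ₗ[K] A) : Set (TensorProduct K A A) :=
  {t | ∃ a b : A, t = a ⊗ₜ[K] b ∧ μ (a ⊗ₜ[K] b) = 0}

/-- An algebra `(A, μ)` is zero product determined iff the kernel of `μ` is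
spanned by the pure tensors it contains. -/
def IsZPD {K A : Type*} [CommRing K] [AddCommGroup A] [Module K A]
    (μ : TensorProduct K A A →ₗ[K] A) : Prop :=
  LinearMap.ker μ = Submodule.span K (zeroTensors μ)

theorem not_isZPD_of_zeroTensors_eq_singleton_zero {K A : Type*} [CommRing K] [AddCommGroup A]
    [Module K A] {μ : A ⊗[K] A →ₗ[K] A} (h₀ : zeroTensors μ = {0})
    (hker : LinearMap.ker μ ≠ ⊥) : ¬ IsZPD μ := by
  rw [IsZPD, h₀, Submodule.span_singleton_eq_bot.mpr rfl]
  exact hker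

theorem TensorProduct.tmul_sub_tmul_ne_zero {R M : Type*} [CommRing R] [IsDomain R]
    [AddCommGroup M] [Module R M] {a b : M} (hab : LinearIndependent R ![a, b]) :
    a ⊗ₜ[R] b - b ⊗ₜ[R] a ≠ 0 := by
  have hind := hab.tmul_of_isDomain hab
  have hpair : LinearIndependent R ![a ⊗ₜ[R] b, b ⊗ₜ[R] a] := by
    convert hind.comp ![(0, 1), (1, 0)] (by decide) using 1
    ext i
    fin_cases i <;> rfl
  intro h
  have := LinearIndependent.pair_iff.mp hpair 1 (-1) (by simpa [sub_eq_add_neg] using h)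
  exact one_ne_zero this.1

section MulKernel

variable {K A : Type*} [CommRing K] [Ring A] [Algebra K A] {μ : A ⊗[K] A →ₗ[K] A}

theorem zeroTensors_eq_singleton_zero [NoZeroDivisors A] (hμ : ∀ a b : A, μ (a ⊗ₜ b) = a * b) :
    zeroTensors μ = {0} := by
  ext t
  constructor
  · rintro ⟨a, b, rfl, hab⟩
    rw [hμ] at hab
    rcases mul_eq_zero.mp hab with rfl | rfl
    · exact zero_tmul A b
    · exact tmul_zero A a
  · rintro rfl
    exact ⟨0, 0, (zero_tmul A 0).symm, by rw [hμ, zero_mul]⟩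

theorem tmul_one_sub_one_tmul_mem_ker (hμ : ∀ a b : A, μ (a ⊗ₜ b) = a * b) (a : A) :
    a ⊗ₜ[K] 1 - 1 ⊗ₜ[K] a ∈ LinearMap.ker μ := by
  rw [LinearMap.mem_ker, map_sub, hμ, hμ, mul_one, one_mul, sub_self]

theorem ker_ne_bot_of_linearIndependent_one [IsDomain K] (hμ : ∀ a b : A, μ (a ⊗ₜ b) = a * b)
    {a : A} (ha : LinearIndependent K ![a, 1]) : LinearMap.ker μ ≠ ⊥ :=
  Submodule.ne_bot_iff _ |>.mpr
    ⟨_, tmul_one_sub_one_tmul_mem_ker hμ a, TensorProduct.tmul_sub_tmul_ne_zero ha⟩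

end MulKernel

theorem TensorAlgebra.linearIndependent_ι_one {R M : Type*} [CommRing R] [IsDomain R]
    [AddCommGroup M] [Module R M] [Module.IsTorsionFree R M] {x : M} (hx : x ≠ 0) :
    LinearIndependent R ![TensorAlgebra.ι R x, 1] := by
  refine LinearIndependent.pair_iff.mpr fun s t hst => ?_
  have : TensorAlgebra.ι R (s • x) = algebraMap R _ (-t) := by
    rw [map_smul, map_neg, Algebra.algebraMap_eq_smul_one, eq_neg_iff_add_eq_zero, hst]
  obtain ⟨hsx, ht⟩ := (TensorAlgebra.ι_eq_algebraMap_iff _ _).mp this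
  exact ⟨(smul_eq_zero.mp hsx).resolve_right hx, neg_eq_zero.mp ht⟩

theorem tensor_algebra_not_zpd {K V : Type*} [Field K] [AddCommGroup V] [Module K V]
    (h : 2 ≤ Module.rank K V)
    (μ : TensorProduct K (TensorAlgebra K V) (TensorAlgebra K V) →ₗ[K] TensorAlgebra K V)
    (hμ : ∀ a b : TensorAlgebra K V, μ (a ⊗ₜ b) = a * b) :
    zeroTensors μ = {0} ∧ LinearMap.ker μ ≠ ⊥ ∧ ¬ IsZPD μ := by
  obtain ⟨x, hx⟩ : ∃ x : V, x ≠ 0 :=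
    rank_pos_iff_exists_ne_zero.mp ((by norm_num : (0 : Cardinal) < 2).trans_le h)
  have h₀ := zeroTensors_eq_singleton_zero hμ
  have hker := ker_ne_bot_of_linearIndependent_one hμ (TensorAlgebra.linearIndependent_ι_one hx)
  exact ⟨h₀, hker, not_isZPD_of_zeroTensors_eq_singleton_zero h₀ hker⟩
end

section
/- Let (A_i, μ_i), i ∈ I, be K-algebras and (A, μ) their direct sum algebra. Then the submodule of A ⊗ A spanned by the pure tensors killed by μ equals (⊕_{i∈I} ⟨T_{μ_i}⟩) ⊕ (⊕_{i≠j} A_i ⊗ A_j), where ⟨T_{μ_i}⟩ is the span in A_i ⊗ A_i of the pure tensors killed by μ_i. -/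
open TensorProduct DirectSum

variable {K : Type*} [CommRing K] {I : Type*} [DecidableEq I]
  {A : I → Type*} [∀ i, AddCommGroup (A i)] [∀ i, Module K (A i)]

/-! The `k`-th component of `μ (x ⊗ y)` is `μi k (x k ⊗ y k)`, because `μ` kills mixed pure
tensors and acts componentwise on diagonal ones. Hence if `μ (x ⊗ y) = 0`, expanding `x` and `y`
into components writes `x ⊗ y` as a sum of diagonal terms `x k ⊗ y k` killed by `μi k` and of
mixed terms `x i ⊗ y j` with `i ≠ j`. Conversely each generator of the right-hand side is a pure
tensor killed by `μ`. -/

lemma component_apply_tmul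
    (μi : ∀ i, A i ⊗[K] A i →ₗ[K] A i) (μ : (⨁ i, A i) ⊗[K] (⨁ i, A i) →ₗ[K] ⨁ i, A i)
    (hdiag : ∀ (i : I) (a b : A i),
      μ (lof K I A i a ⊗ₜ lof K I A i b) = lof K I A i (μi i (a ⊗ₜ b)))
    (hoff : ∀ i j : I, i ≠ j → ∀ (a : A i) (b : A j),
      μ (lof K I A i a ⊗ₜ lof K I A j b) = 0)
    (k : I) (x y : ⨁ i, A i) :
    component K I A k (μ (x ⊗ₜ y)) = μi k (x k ⊗ₜ y k) := by
  induction x using DirectSum.induction_on with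
  | zero => simp
  | add x x' hx hx' => simp [add_tmul, hx, hx']
  | of i a =>
    induction y using DirectSum.induction_on with
    | zero => simp
    | add y y' hy hy' => simp [tmul_add, hy, hy']
    | of j b =>
      rw [← lof_eq_of K, ← lof_eq_of K]
      obtain rfl | hij := eq_or_ne i j
      · rw [hdiag, ← apply_eq_component]
        obtain rfl | hik := eq_or_ne i k
        · simp [lof_eq_of]
        · simp [lof_eq_of, of_eq_of_ne _ _ _ hik.symm]
      · rw [hoff _ _ hij, map_zero]
        obtain rfl | hik := eq_or_ne i k
        · simp [lof_eq_of, of_eq_of_ne _ _ _ hij]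
        · simp [lof_eq_of, of_eq_of_ne _ _ _ hik.symm]

lemma tmul_mem_of_forall_lof_tmul_lof_mem {B : I → Type*} [∀ i, AddCommGroup (B i)]
    [∀ i, Module K (B i)] {p : Submodule K ((⨁ i, A i) ⊗[K] (⨁ i, B i))}
    {x : ⨁ i, A i} {y : ⨁ i, B i}
    (h : ∀ i j, lof K I A i (x i) ⊗ₜ lof K I B j (y j) ∈ p) : x ⊗ₜ y ∈ p := by
  classical
  rw [← sum_support_of x, ← sum_support_of y, sum_tmul]
  refine Submodule.sum_mem _ fun i _ => ?_
  rw [tmul_sum]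
  exact Submodule.sum_mem _ fun j _ => h i j

lemma map_span_zeroTensors_le_span_zeroTensors
    (μi : ∀ i, A i ⊗[K] A i →ₗ[K] A i) (μ : (⨁ i, A i) ⊗[K] (⨁ i, A i) →ₗ[K] ⨁ i, A i)
    (hdiag : ∀ (i : I) (a b : A i),
      μ (lof K I A i a ⊗ₜ lof K I A i b) = lof K I A i (μi i (a ⊗ₜ b)))
    (i : I) :
    (Submodule.span K (zeroTensors (μi i))).map (map (lof K I A i) (lof K I A i)) ≤
      Submodule.span K (zeroTensors μ) := by
  rw [Submodule.map_span, Submodule.span_le]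
  rintro _ ⟨_, ⟨a, b, rfl, hab⟩, rfl⟩
  exact Submodule.subset_span ⟨_, _, map_tmul .., by rw [hdiag, hab, map_zero]⟩

lemma range_map_lof_le_span_zeroTensors
    (μ : (⨁ i, A i) ⊗[K] (⨁ i, A i) →ₗ[K] ⨁ i, A i)
    (hoff : ∀ i j : I, i ≠ j → ∀ (a : A i) (b : A j),
      μ (lof K I A i a ⊗ₜ lof K I A j b) = 0)
    {i j : I} (hij : i ≠ j) :
    LinearMap.range (map (lof K I A i) (lof K I A j)) ≤ Submodule.span K (zeroTensors μ) := by
  rw [range_map_eq_span_tmul, Submodule.span_le]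
  rintro _ ⟨a, b, rfl⟩
  exact Submodule.subset_span ⟨_, _, rfl, hoff i j hij a b⟩

theorem direct_sum_pure_tensors
    (μi : ∀ i, TensorProduct K (A i) (A i) →ₗ[K] A i)
    (μ : TensorProduct K (⨁ i, A i) (⨁ i, A i) →ₗ[K] ⨁ i, A i)
    (hdiag : ∀ (i : I) (a b : A i),
      μ (DirectSum.lof K I A i a ⊗ₜ DirectSum.lof K I A i b) =
        DirectSum.lof K I A i (μi i (a ⊗ₜ b)))
    (hoff : ∀ i j : I, i ≠ j → ∀ (a : A i) (b : A j),
      μ (DirectSum.lof K I A i a ⊗ₜ DirectSum.lof K I A j b) = 0) :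
    Submodule.span K (zeroTensors μ) =
      (⨆ i : I, Submodule.map
          (TensorProduct.map (DirectSum.lof K I A i) (DirectSum.lof K I A i))
          (Submodule.span K (zeroTensors (μi i)))) ⊔
      (⨆ (p : I × I) (_ : p.1 ≠ p.2), LinearMap.range
          (TensorProduct.map (DirectSum.lof K I A p.1) (DirectSum.lof K I A p.2))) := by
  refine le_antisymm (Submodule.span_le.2 ?_) <| sup_le
    (iSup_le (map_span_zeroTensors_le_span_zeroTensors μi μ hdiag))
    (iSup₂_le fun _ => range_map_lof_le_span_zeroTensors μ hoff)
  rintro _ ⟨x, y, rfl, hxy⟩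
  refine tmul_mem_of_forall_lof_tmul_lof_mem fun i j => ?_
  obtain rfl | hij := eq_or_ne i j
  · have hi : μi i (x i ⊗ₜ y i) = 0 := by
      rw [← component_apply_tmul μi μ hdiag hoff, hxy, map_zero]
    exact Submodule.mem_sup_left <| Submodule.mem_iSup_of_mem i
      ⟨_, Submodule.subset_span ⟨_, _, rfl, hi⟩, map_tmul ..⟩
  · exact Submodule.mem_sup_right <| Submodule.mem_iSup_of_mem (i, j) <|
      Submodule.mem_iSup_of_mem hij ⟨_, map_tmul ..⟩
end

section
/- Let (A_i, μ_i), i ∈ I, be K-algebras for an arbitrary index set I, and let (A, μ) be their direct sum algebra. Then (A, μ) is zero product determined if and only if (A_i, μ_i) is zero product determined for every i ∈ I. -/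
open TensorProduct DirectSum

/-!
Each `A i` is a retract of `⨁ i, A i` through the multiplicative maps `lof` and `component`,
and being zero product determined passes to retracts. Conversely, a tensor in
`(⨁ A) ⊗ (⨁ A)` is the sum of its `(j, k)`-components; those with `j ≠ k` are sums of pure tensors
with zero product, and a diagonal component of an element of `ker μ` lies in `ker μᵢ`, which is
spanned by pure tensors with zero product.
-/

section ZeroProductDetermined

variable {K A B : Type*} [CommRing K] [AddCommGroup A] [Module K A] [AddCommGroup B] [Module K B]

lemma span_zeroTensors_le_ker (ν : A ⊗[K] A →ₗ[K] A) :
    Submodule.span K (zeroTensors ν) ≤ LinearMap.ker ν :=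
  Submodule.span_le.mpr fun _ ⟨_, _, ht, h⟩ => ht ▸ h

lemma isZPD_iff_ker_le {ν : A ⊗[K] A →ₗ[K] A} :
    IsZPD ν ↔ LinearMap.ker ν ≤ Submodule.span K (zeroTensors ν) :=
  ⟨le_of_eq, fun h => le_antisymm h (span_zeroTensors_le_ker ν)⟩

lemma map_span_zeroTensors_le {ν : A ⊗[K] A →ₗ[K] A} {ν' : B ⊗[K] B →ₗ[K] B} {f : A →ₗ[K] B}
    (hf : ν' ∘ₗ TensorProduct.map f f = f ∘ₗ ν) :
    (Submodule.span K (zeroTensors ν)).map (TensorProduct.map f f) ≤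
      Submodule.span K (zeroTensors ν') := by
  rw [Submodule.map_span]
  refine Submodule.span_mono ?_
  rintro _ ⟨_, ⟨a, b, rfl, hab⟩, rfl⟩
  refine ⟨f a, f b, TensorProduct.map_tmul f f a b, ?_⟩
  rw [← TensorProduct.map_tmul f f, ← LinearMap.comp_apply, hf, LinearMap.comp_apply, hab,
    map_zero]

lemma IsZPD.of_retract {ν : A ⊗[K] A →ₗ[K] A} {ν' : B ⊗[K] B →ₗ[K] B}
    {f : A →ₗ[K] B} {g : B →ₗ[K] A} (hgf : g ∘ₗ f = LinearMap.id)
    (hf : ν' ∘ₗ TensorProduct.map f f = f ∘ₗ ν) (hg : ν ∘ₗ TensorProduct.map g g = g ∘ₗ ν')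
    (h : IsZPD ν') : IsZPD ν := by
  refine isZPD_iff_ker_le.mpr fun t ht => ?_
  have hft : TensorProduct.map f f t ∈ Submodule.span K (zeroTensors ν') := by
    rw [← h, LinearMap.mem_ker, ← LinearMap.comp_apply, hf, LinearMap.comp_apply,
      LinearMap.mem_ker.mp ht, map_zero]
  have hgft : TensorProduct.map g g (TensorProduct.map f f t) = t := by
    rw [← LinearMap.comp_apply, ← TensorProduct.map_comp, hgf, TensorProduct.map_id,
      LinearMap.id_apply]
  exact hgft ▸ map_span_zeroTensors_le hg (Submodule.mem_map_of_mem hft)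

end ZeroProductDetermined

section TensorDirectSum

variable {R ι κ : Type*} [CommSemiring R] [DecidableEq ι] [DecidableEq κ]
  {M : ι → Type*} {N : κ → Type*} [∀ i, AddCommMonoid (M i)] [∀ i, Module R (M i)]
  [∀ k, AddCommMonoid (N k)] [∀ k, Module R (N k)]

lemma TensorProduct.directSum_symm_comp_lof (p : ι × κ) :
    (TensorProduct.directSum R R M N).symm.toLinearMap ∘ₗ
        lof R (ι × κ) (fun p => M p.1 ⊗[R] N p.2) p =
      TensorProduct.map (lof R ι M p.1) (lof R κ N p.2) := by
  obtain ⟨i, k⟩ := p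
  ext x y
  simp

lemma TensorProduct.component_comp_directSum (p : ι × κ) :
    component R (ι × κ) (fun p => M p.1 ⊗[R] N p.2) p ∘ₗ
        (TensorProduct.directSum R R M N).toLinearMap =
      TensorProduct.map (component R ι M p.1) (component R κ N p.2) := by
  obtain ⟨i₀, k₀⟩ := p
  ext i x k y
  rcases eq_or_ne i i₀ with rfl | hi
  · rcases eq_or_ne k k₀ with rfl | hk
    · simp
    · simp [component.of, hk]
  · simp [component.of, hi]

lemma TensorProduct.mem_of_forall_map_lof_component_mem
    (S : Submodule R ((⨁ i, M i) ⊗[R] ⨁ k, N k)) (t : (⨁ i, M i) ⊗[R] ⨁ k, N k)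
    (h : ∀ i k, TensorProduct.map (lof R ι M i) (lof R κ N k)
      (TensorProduct.map (component R ι M i) (component R κ N k) t) ∈ S) :
    t ∈ S := by
  classical
  set e := TensorProduct.directSum R R M N
  rw [← e.symm_apply_apply t, ← sum_support_of (e t), map_sum]
  refine Submodule.sum_mem _ fun p _ => ?_
  have hp := h p.1 p.2
  rwa [← TensorProduct.component_comp_directSum, ← TensorProduct.directSum_symm_comp_lof] at hp

end TensorDirectSum

variable {K : Type*} [CommRing K] {I : Type*} [DecidableEq I]
  {A : I → Type*} [∀ i, AddCommGroup (A i)] [∀ i, Module K (A i)]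

section DirectSumAlgebra

variable {μi : ∀ i, A i ⊗[K] A i →ₗ[K] A i} {μ : (⨁ i, A i) ⊗[K] (⨁ i, A i) →ₗ[K] ⨁ i, A i}

lemma comp_map_lof_lof_eq
    (hdiag : ∀ (i : I) (a b : A i),
      μ (lof K I A i a ⊗ₜ lof K I A i b) = lof K I A i (μi i (a ⊗ₜ b)))
    (i : I) :
    μ ∘ₗ TensorProduct.map (lof K I A i) (lof K I A i) = lof K I A i ∘ₗ μi i := by
  ext a b
  simp [hdiag]

lemma comp_map_component_component_eq
    (hdiag : ∀ (i : I) (a b : A i),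
      μ (lof K I A i a ⊗ₜ lof K I A i b) = lof K I A i (μi i (a ⊗ₜ b)))
    (hoff : ∀ i j : I, i ≠ j → ∀ (a : A i) (b : A j), μ (lof K I A i a ⊗ₜ lof K I A j b) = 0)
    (i : I) :
    μi i ∘ₗ TensorProduct.map (component K I A i) (component K I A i) = component K I A i ∘ₗ μ := by
  ext j a k b
  rcases eq_or_ne j k with rfl | hjk
  · rcases eq_or_ne j i with rfl | hji
    · simp [hdiag]
    · simp [hdiag, component.of, hji]
  · rcases eq_or_ne j i with rfl | hji
    · simp [hoff _ _ hjk, component.of, hjk.symm]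
    · simp [hoff _ _ hjk, component.of, hji]

lemma map_lof_lof_mem_span_zeroTensors
    (hoff : ∀ i j : I, i ≠ j → ∀ (a : A i) (b : A j), μ (lof K I A i a ⊗ₜ lof K I A j b) = 0)
    {j k : I} (hjk : j ≠ k) (s : A j ⊗[K] A k) :
    TensorProduct.map (lof K I A j) (lof K I A k) s ∈ Submodule.span K (zeroTensors μ) := by
  induction s using TensorProduct.induction_on with
  | zero => simp
  | tmul a b => exact Submodule.subset_span ⟨_, _, TensorProduct.map_tmul .., hoff j k hjk a b⟩
  | add s s' hs hs' => rw [map_add]; exact Submodule.add_mem _ hs hs'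

end DirectSumAlgebra

theorem direct_sum_zpd_iff
    (μi : ∀ i, TensorProduct K (A i) (A i) →ₗ[K] A i)
    (μ : TensorProduct K (⨁ i, A i) (⨁ i, A i) →ₗ[K] ⨁ i, A i)
    (hdiag : ∀ (i : I) (a b : A i),
      μ (DirectSum.lof K I A i a ⊗ₜ DirectSum.lof K I A i b) =
        DirectSum.lof K I A i (μi i (a ⊗ₜ b)))
    (hoff : ∀ i j : I, i ≠ j → ∀ (a : A i) (b : A j),
      μ (DirectSum.lof K I A i a ⊗ₜ DirectSum.lof K I A j b) = 0) :
    IsZPD μ ↔ ∀ i : I, IsZPD (μi i) := by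
  constructor
  · exact fun h i => h.of_retract (component_comp_lof_same K i)
      (comp_map_lof_lof_eq hdiag i) (comp_map_component_component_eq hdiag hoff i)
  · refine fun h => isZPD_iff_ker_le.mpr fun t ht => ?_
    refine TensorProduct.mem_of_forall_map_lof_component_mem _ t fun j k => ?_
    rcases eq_or_ne j k with rfl | hjk
    · have hker : TensorProduct.map (component K I A j) (component K I A j) t ∈
          LinearMap.ker (μi j) := by
        rw [LinearMap.mem_ker, ← LinearMap.comp_apply, comp_map_component_component_eq hdiag hoff,
          LinearMap.comp_apply, LinearMap.mem_ker.mp ht, map_zero]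
      rw [h j] at hker
      exact map_span_zeroTensors_le (comp_map_lof_lof_eq hdiag j) (Submodule.mem_map_of_mem hker)
    · exact map_lof_lof_mem_span_zeroTensors hoff hjk _
end

section
/- Let A be a zero product determined K-algebra with identity 1_A, let B be a K-algebra, and let f : A → B be a K-linear map such that f(a₁)f(a₂) = 0 whenever a₁a₂ = 0. Then f(a₁)f(a₂) = f(1_A) f(a₁a₂) for all a₁, a₂ ∈ A. -/
theorem zpd_zero_product_preserver_general {K : Type u} [CommRing K]
    {A : Type v} [NonAssocRing A] [Module K A]
    {B : Type w} [NonUnitalNonAssocRing B] [Module K B] [SMulCommClass K B B]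
    [IsScalarTower K B B]
    (hzpd : ∀ (M : Type w) [AddCommGroup M] [Module K M] (φ : A →ₗ[K] A →ₗ[K] M),
      (∀ a₁ a₂ : A, a₁ * a₂ = 0 → φ a₁ a₂ = 0) →
      ∃ ψ : ↥(Submodule.span K {x : A | ∃ a₁ a₂ : A, x = a₁ * a₂}) →ₗ[K] M,
        ∀ a₁ a₂ : A, φ a₁ a₂ = ψ ⟨a₁ * a₂, Submodule.subset_span ⟨a₁, a₂, rfl⟩⟩)
    (f : A →ₗ[K] B)
    (hf : ∀ a₁ a₂ : A, a₁ * a₂ = 0 → f a₁ * f a₂ = 0) :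
    ∀ a₁ a₂ : A, f a₁ * f a₂ = f 1 * f (a₁ * a₂) := by
  -- both sides are the factorization ψ of (a₁, a₂) ↦ f a₁ * f a₂ evaluated at a₁ a₂ = 1 (a₁ a₂)
  obtain ⟨ψ, hψ⟩ := hzpd B (((LinearMap.mul K B).comp f).compl₂ f) hf
  intro a₁ a₂
  have h_one := hψ 1 (a₁ * a₂)
  simp only [one_mul] at h_one
  simpa only [LinearMap.compl₂_apply, LinearMap.comp_apply, LinearMap.mul_apply'] using
    (hψ a₁ a₂).trans h_one.symm

theorem zpd_zero_product_preserver {K : Type u} [CommRing K]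
    {A : Type v} [NonAssocRing A] [Module K A] [SMulCommClass K A A] [IsScalarTower K A A]
    {B : Type w} [NonUnitalNonAssocRing B] [Module K B] [SMulCommClass K B B]
    [IsScalarTower K B B]
    (hzpd : ∀ (M : Type w) [AddCommGroup M] [Module K M] (φ : A →ₗ[K] A →ₗ[K] M),
      (∀ a₁ a₂ : A, a₁ * a₂ = 0 → φ a₁ a₂ = 0) →
      ∃ ψ : ↥(Submodule.span K {x : A | ∃ a₁ a₂ : A, x = a₁ * a₂}) →ₗ[K] M,
        ∀ a₁ a₂ : A, φ a₁ a₂ = ψ ⟨a₁ * a₂, Submodule.subset_span ⟨a₁, a₂, rfl⟩⟩)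
    (f : A →ₗ[K] B)
    (hf : ∀ a₁ a₂ : A, a₁ * a₂ = 0 → f a₁ * f a₂ = 0) :
    ∀ a₁ a₂ : A, f a₁ * f a₂ = f 1 * f (a₁ * a₂) :=
  zpd_zero_product_preserver_general hzpd f hf
end

section
/- Let A be a zero product determined unital K-algebra, B a unital K-algebra, and f : A → B a zero product preserving K-linear map with f(1_A) = 1_B. Then f is a K-algebra homomorphism, i.e., f(a₁a₂) = f(a₁)f(a₂) for all a₁, a₂ ∈ A. -/
universe u v w

/-!
The bilinear map `(a₁, a₂) ↦ f a₁ * f a₂` vanishes on zero products, so zero product determinacy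
factors it as `ψ (a₁ * a₂)`. Taking `a₂ = 1` shows `f = ψ`, whence `f (a₁ * a₂) = f a₁ * f a₂`.
-/

theorem map_mul_of_factors_through_mul {A B : Type*} [MulOneClass A] [MulOneClass B]
    {f : A → B} (hone : f 1 = 1) {g : A → B} (hg : ∀ a₁ a₂, f a₁ * f a₂ = g (a₁ * a₂))
    (a₁ a₂ : A) : f (a₁ * a₂) = f a₁ * f a₂ := by
  have hfg : ∀ a, f a = g a := fun a => by simpa [hone] using hg a 1
  rw [hfg, hg]

theorem mem_span_setOf_mul {K A : Type*} [Semiring K] [NonAssocSemiring A] [Module K A] (a : A) :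
    a ∈ Submodule.span K {x : A | ∃ a₁ a₂ : A, x = a₁ * a₂} :=
  Submodule.subset_span ⟨a, 1, (mul_one a).symm⟩

theorem zpd_unital_zero_product_preserver_is_hom_general {K : Type u} [CommRing K]
    {A : Type v} [NonAssocRing A] [Module K A]
    {B : Type w} [NonAssocRing B] [Module K B] [SMulCommClass K B B] [IsScalarTower K B B]
    (hzpd : ∀ (M : Type w) [AddCommGroup M] [Module K M] (φ : A →ₗ[K] A →ₗ[K] M),
      (∀ a₁ a₂ : A, a₁ * a₂ = 0 → φ a₁ a₂ = 0) →
      ∃ ψ : ↥(Submodule.span K {x : A | ∃ a₁ a₂ : A, x = a₁ * a₂}) →ₗ[K] M,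
        ∀ a₁ a₂ : A, φ a₁ a₂ = ψ ⟨a₁ * a₂, Submodule.subset_span ⟨a₁, a₂, rfl⟩⟩)
    (f : A →ₗ[K] B)
    (hf : ∀ a₁ a₂ : A, a₁ * a₂ = 0 → f a₁ * f a₂ = 0)
    (hone : f 1 = 1) :
    ∀ a₁ a₂ : A, f (a₁ * a₂) = f a₁ * f a₂ := by
  obtain ⟨ψ, hψ⟩ := hzpd B ((LinearMap.mul K B).compl₁₂ f f) hf
  exact map_mul_of_factors_through_mul hone (g := fun a => ψ ⟨a, mem_span_setOf_mul a⟩) hψ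

theorem zpd_unital_zero_product_preserver_is_hom {K : Type u} [CommRing K]
    {A : Type v} [NonAssocRing A] [Module K A] [SMulCommClass K A A] [IsScalarTower K A A]
    {B : Type w} [NonAssocRing B] [Module K B] [SMulCommClass K B B] [IsScalarTower K B B]
    (hzpd : ∀ (M : Type w) [AddCommGroup M] [Module K M] (φ : A →ₗ[K] A →ₗ[K] M),
      (∀ a₁ a₂ : A, a₁ * a₂ = 0 → φ a₁ a₂ = 0) →
      ∃ ψ : ↥(Submodule.span K {x : A | ∃ a₁ a₂ : A, x = a₁ * a₂}) →ₗ[K] M,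
        ∀ a₁ a₂ : A, φ a₁ a₂ = ψ ⟨a₁ * a₂, Submodule.subset_span ⟨a₁, a₂, rfl⟩⟩)
    (f : A →ₗ[K] B)
    (hf : ∀ a₁ a₂ : A, a₁ * a₂ = 0 → f a₁ * f a₂ = 0)
    (hone : f 1 = 1) :
    ∀ a₁ a₂ : A, f (a₁ * a₂) = f a₁ * f a₂ :=
  zpd_unital_zero_product_preserver_is_hom_general hzpd f hf hone
end
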